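/- The Boolean family of semantic structures. For each natural number k < 128, define s_k as follows: value type Bool, address set ℕ, size 1, encoding s_k.to_byte false = [2k] and s_k.to_byte true = [2k+1], and decoding s_k.from_byte [2k] = some false, s_k.from_byte [2k+1] = some true, and s_k.from_byte bl = none for every other byte list bl. Then (i) each s_k is a semantic structure, i.e., satisfies the length law and the decode-after-encode law; and (ii) for every byte list bl there exists k < 128 with s_k.from_byte bl = none. In particular, no fixed byte value (and no fixed byte list) lies in the domain of definedness of every s_k.from_byte, so any modification writing a fixed constant byte at the address of a Boolean variable is detected by some member of the family. -/

import Mathlib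

/-- Bytes are `Fin 256`. -/
abbrev Byte := Fin 256

open Fin.NatCast

/-- Encoding of the `k`-th Boolean semantic structure:
`false ↦ [2k]`, `true ↦ [2k+1]`. -/
def boolToByte (k : ℕ) : Bool → List Byte :=
  fun b => if b then [((2 * k + 1 : ℕ) : Byte)] else [((2 * k : ℕ) : Byte)]

/-- Decoding of the `k`-th Boolean semantic structure: defined exactly on
`[2k] ↦ false` and `[2k+1] ↦ true`, `none` on every other byte list. -/
def boolFromByte (k : ℕ) : List Byte → Option Bool :=
  fun bl =>
    if bl = [((2 * k : ℕ) : Byte)] then some false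
    else if bl = [((2 * k + 1 : ℕ) : Byte)] then some true
    else none

theorem boolToByte_length (k : ℕ) (v : Bool) : (boolToByte k v).length = 1 := by
  cases v <;> rfl

theorem boolFromByte_boolToByte (k : ℕ) (v : Bool) :
    boolFromByte k (boolToByte k v) = some v := by
  cases v <;> simp [boolToByte, boolFromByte]

theorem boolFromByte_ne_none_iff (k : ℕ) (bl : List Byte) :
    boolFromByte k bl ≠ none ↔ bl = [((2 * k : ℕ) : Byte)] ∨ bl = [((2 * k + 1 : ℕ) : Byte)] := by
  unfold boolFromByte
  split_ifs <;> simp_all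

/-- `s_0` is defined only on `[0]`, `[1]` and `s_1` only on `[2]`, `[3]`, so one of them rejects `bl`. -/
theorem exists_boolFromByte_eq_none (bl : List Byte) :
    ∃ k : ℕ, k < 128 ∧ boolFromByte k bl = none := by
  by_contra! h
  have h0 := (boolFromByte_ne_none_iff 0 bl).mp (h 0 (by norm_num))
  have h1 := (boolFromByte_ne_none_iff 1 bl).mp (h 1 (by norm_num))
  rcases h0 with rfl | rfl <;> rcases h1 with h1 | h1 <;> simp at h1

/-- The Boolean family of semantic structures: (i) each `s_k` (size 1,
address set ℕ) satisfies the length law and the decode-after-encode law;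
(ii) for every byte list `bl` some member of the family is undefined on `bl`,
so no fixed byte list lies in the domain of every `s_k.from_byte`. -/
theorem boolean_family :
    (∀ k : ℕ, k < 128 →
      (∀ v : Bool, (boolToByte k v).length = 1) ∧
      (∀ v : Bool, boolFromByte k (boolToByte k v) = some v)) ∧
    (∀ bl : List Byte, ∃ k : ℕ, k < 128 ∧ boolFromByte k bl = none) :=
  ⟨fun k _ => ⟨boolToByte_length k, boolFromByte_boolToByte k⟩, exists_boolFromByte_eq_none⟩
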